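/- arXiv:1608.07587 — 8 statements merged into one kernel-verified Lean document; each statement's English description precedes it below -/
import Mathlib

section
/- Suppose a covector A on V and a real number ψ satisfy the Bianchi-type identity A_i (R_{jklm} − ψ G_{jklm}) + A_j (R_{kilm} − ψ G_{kilm}) + A_k (R_{ijlm} − ψ G_{ijlm}) = 0 for all indices, where R is a curvature-like tensor on (V,g). Then R_{jklm} A^m = A_k (Ric_{jl} + ψ(n−2) g_{jl}) − A_j (Ric_{kl} + ψ(n−2) g_{kl}) for all indices j,k,l. -/
open Finset

open Matrix

theorem stmt_0 (n : ℕ) (hn : 3 ≤ n)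
    (g ginv : Fin n → Fin n → ℝ)
    (hgsymm : ∀ i j, g i j = g j i)
    (hginv : ∀ i j, ∑ k, g i k * ginv k j = if i = j then (1:ℝ) else 0)
    (R : Fin n → Fin n → Fin n → Fin n → ℝ)
    (hR1 : ∀ j k l m, R j k l m = - R k j l m)
    (hR2 : ∀ j k l m, R j k l m = - R j k m l)
    (hR3 : ∀ j k l m, R j k l m = R l m j k)
    (hR4 : ∀ j k l m, R j k l m + R k l j m + R l j k m = 0)
    (G : Fin n → Fin n → Fin n → Fin n → ℝ)
    (hG : ∀ j k l m, G j k l m = g m j * g k l - g m k * g j l)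
    (Ric : Fin n → Fin n → ℝ)
    (hRic : ∀ k l, Ric k l = ∑ i, ∑ m, ginv i m * R k i l m)
    (A : Fin n → ℝ) (ψ : ℝ)
    (hB : ∀ i j k l m,
      A i * (R j k l m - ψ * G j k l m) + A j * (R k i l m - ψ * G k i l m)
        + A k * (R i j l m - ψ * G i j l m) = 0) :
    ∀ j k l, (∑ m, (∑ p, ginv m p * A p) * R j k l m)
      = A k * (Ric j l + ψ * ((n:ℝ) - 2) * g j l)
        - A j * (Ric k l + ψ * ((n:ℝ) - 2) * g k l) := by
  -- ginv is also a left inverse of g, and symmetric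
  have hMN : (Matrix.of g) * (Matrix.of ginv) = 1 := by
    ext i j
    simpa [Matrix.mul_apply, Matrix.one_apply] using hginv i j
  have hNM : (Matrix.of ginv) * (Matrix.of g) = 1 := mul_eq_one_comm.mp hMN
  have hinv2 : ∀ i j, ∑ k, ginv i k * g k j = if i = j then (1:ℝ) else 0 := by
    intro i j
    have := congrFun (congrFun hNM i) j
    simpa [Matrix.mul_apply, Matrix.one_apply] using this
  have hMt : (Matrix.of g)ᵀ = Matrix.of g := by
    ext a b; simp [Matrix.transpose_apply, hgsymm a b]
  have hNt : (Matrix.of ginv)ᵀ = Matrix.of ginv := by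
    calc (Matrix.of ginv)ᵀ = (Matrix.of ginv)ᵀ * ((Matrix.of g) * (Matrix.of ginv)) := by
          rw [hMN, mul_one]
      _ = ((Matrix.of ginv)ᵀ * (Matrix.of g)ᵀ) * (Matrix.of ginv) := by rw [hMt, mul_assoc]
      _ = ((Matrix.of g) * (Matrix.of ginv))ᵀ * (Matrix.of ginv) := by rw [Matrix.transpose_mul]
      _ = Matrix.of ginv := by rw [hMN]; simp
  have hsymm : ∀ i j, ginv i j = ginv j i := by
    intro i j
    have := congrFun (congrFun hNt j) i
    simpa [Matrix.transpose_apply] using this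
  intro j k l
  -- contract the hypothesis with ginv
  have hcomb : ∑ i, ∑ m, (ginv i m * (A i * R j k l m)
      - ψ * (ginv i m * (A i * G j k l m))
      + A j * (ginv i m * R k i l m)
      - ψ * A j * (ginv i m * G k i l m)
      + A k * (ginv i m * R i j l m)
      - ψ * A k * (ginv i m * G i j l m)) = 0 := by
    calc _ = ∑ i, ∑ m, ginv i m * (A i * (R j k l m - ψ * G j k l m)
          + A j * (R k i l m - ψ * G k i l m) + A k * (R i j l m - ψ * G i j l m)) := by
          exact Finset.sum_congr rfl fun i _ => Finset.sum_congr rfl fun m _ => by ring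
      _ = 0 := by simp [hB]
  simp only [Finset.sum_add_distrib, Finset.sum_sub_distrib, ← Finset.mul_sum] at hcomb
  -- the six contractions
  have P1 : ∑ i, ∑ m, ginv i m * (A i * R j k l m)
      = ∑ m, (∑ p, ginv m p * A p) * R j k l m := by
    rw [Finset.sum_comm]
    refine Finset.sum_congr rfl fun m _ => ?_
    rw [Finset.sum_mul]
    refine Finset.sum_congr rfl fun p _ => ?_
    rw [hsymm p m]; ring
  have P2 : ∑ i, ∑ m, ginv i m * (A i * G j k l m) = A j * g k l - A k * g j l := by
    have h1 : ∀ i : Fin n, ∑ m, ginv i m * (A i * G j k l m)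
        = A i * g k l * (if i = j then (1:ℝ) else 0)
          - A i * g j l * (if i = k then (1:ℝ) else 0) := by
      intro i
      calc ∑ m, ginv i m * (A i * G j k l m)
          = ∑ m, (A i * g k l * (ginv i m * g m j) - A i * g j l * (ginv i m * g m k)) := by
            exact Finset.sum_congr rfl fun m _ => by rw [hG]; ring
        _ = A i * g k l * (∑ m, ginv i m * g m j) - A i * g j l * (∑ m, ginv i m * g m k) := by
            rw [Finset.sum_sub_distrib, Finset.mul_sum, Finset.mul_sum]
        _ = _ := by rw [hinv2, hinv2]
    simp only [h1]
    simp [Finset.sum_sub_distrib, mul_ite, mul_one, mul_zero]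
  have P3 : ∑ i, ∑ m, ginv i m * R k i l m = Ric k l := (hRic k l).symm
  have P4 : ∑ i, ∑ m, ginv i m * G k i l m = (1 - (n:ℝ)) * g k l := by
    have h1 : ∀ i : Fin n, ∑ m, ginv i m * G k i l m
        = g i l * (if i = k then (1:ℝ) else 0) - g k l * (if i = i then (1:ℝ) else 0) := by
      intro i
      calc ∑ m, ginv i m * G k i l m
          = ∑ m, (g i l * (ginv i m * g m k) - g k l * (ginv i m * g m i)) := by
            exact Finset.sum_congr rfl fun m _ => by rw [hG]; ring
        _ = g i l * (∑ m, ginv i m * g m k) - g k l * (∑ m, ginv i m * g m i) := by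
            rw [Finset.sum_sub_distrib, Finset.mul_sum, Finset.mul_sum]
        _ = _ := by rw [hinv2, hinv2]
    simp only [h1, if_pos rfl]
    simp [Finset.sum_sub_distrib, mul_ite, mul_one, mul_zero, Finset.card_univ]
    ring
  have P5 : ∑ i, ∑ m, ginv i m * R i j l m = - Ric j l := by
    calc ∑ i, ∑ m, ginv i m * R i j l m = ∑ i, ∑ m, -(ginv i m * R j i l m) := by
          exact Finset.sum_congr rfl fun i _ => Finset.sum_congr rfl fun m _ => by
            rw [hR1 i j]; ring
      _ = - Ric j l := by rw [hRic]; simp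
  have P6 : ∑ i, ∑ m, ginv i m * G i j l m = ((n:ℝ) - 1) * g j l := by
    have h1 : ∀ i : Fin n, ∑ m, ginv i m * G i j l m
        = g j l * (if i = i then (1:ℝ) else 0) - g i l * (if i = j then (1:ℝ) else 0) := by
      intro i
      calc ∑ m, ginv i m * G i j l m
          = ∑ m, (g j l * (ginv i m * g m i) - g i l * (ginv i m * g m j)) := by
            exact Finset.sum_congr rfl fun m _ => by rw [hG]; ring
        _ = g j l * (∑ m, ginv i m * g m i) - g i l * (∑ m, ginv i m * g m j) := by
            rw [Finset.sum_sub_distrib, Finset.mul_sum, Finset.mul_sum]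
        _ = _ := by rw [hinv2, hinv2]
    simp only [h1, if_pos rfl]
    simp [Finset.sum_sub_distrib, mul_ite, mul_one, mul_zero, Finset.card_univ]
    ring
  rw [P1, P2, P3, P4, P5, P6] at hcomb
  linear_combination hcomb
end

section
/- Suppose a covector A on V and a real number ψ satisfy the Bianchi-type identity A_i (R_{jklm} − ψ G_{jklm}) + A_j (R_{kilm} − ψ G_{kilm}) + A_k (R_{ijlm} − ψ G_{ijlm}) = 0 for all indices, where R is a curvature-like tensor on (V,g). Then Ric_{jm} A^m = (1/2) A_j (Scal + ψ(n−2)(n−1)) for all j. -/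
open Finset

theorem stmt_1 (n : ℕ) (hn : 3 ≤ n)
    (g ginv : Fin n → Fin n → ℝ)
    (hgsymm : ∀ i j, g i j = g j i)
    (hginv : ∀ i j, ∑ k, g i k * ginv k j = if i = j then (1:ℝ) else 0)
    (R : Fin n → Fin n → Fin n → Fin n → ℝ)
    (hR1 : ∀ j k l m, R j k l m = - R k j l m)
    (hR2 : ∀ j k l m, R j k l m = - R j k m l)
    (hR3 : ∀ j k l m, R j k l m = R l m j k)
    (hR4 : ∀ j k l m, R j k l m + R k l j m + R l j k m = 0)
    (G : Fin n → Fin n → Fin n → Fin n → ℝ)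
    (hG : ∀ j k l m, G j k l m = g m j * g k l - g m k * g j l)
    (Ric : Fin n → Fin n → ℝ)
    (hRic : ∀ k l, Ric k l = ∑ i, ∑ m, ginv i m * R k i l m)
    (Scal : ℝ)
    (hScal : Scal = ∑ k, ∑ l, ginv k l * Ric k l)
    (A : Fin n → ℝ) (ψ : ℝ)
    (hB : ∀ i j k l m,
      A i * (R j k l m - ψ * G j k l m) + A j * (R k i l m - ψ * G k i l m)
        + A k * (R i j l m - ψ * G i j l m) = 0) :
    ∀ j, (∑ m, Ric j m * (∑ p, ginv m p * A p))
      = (1 / 2) * A j * (Scal + ψ * ((n:ℝ) - 2) * ((n:ℝ) - 1)) := by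
  -- ginv is symmetric
  have hginvsymm : ∀ a b, ginv a b = ginv b a := by
    open Matrix in
    set M : Matrix (Fin n) (Fin n) ℝ := Matrix.of g with hM
    set N : Matrix (Fin n) (Fin n) ℝ := Matrix.of ginv with hN
    have hMN : M * N = 1 := by
      ext a b
      simpa [Matrix.mul_apply, hM, hN, Matrix.one_apply] using hginv a b
    have hMsym : Mᵀ = M := by
      ext a b; simp [hM, Matrix.transpose_apply, hgsymm a b]
    have hNtM : Nᵀ * M = 1 := by
      calc Nᵀ * M = Nᵀ * Mᵀ := by rw [hMsym]
        _ = (M * N)ᵀ := (Matrix.transpose_mul M N).symm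
        _ = 1 := by rw [hMN, Matrix.transpose_one]
    have hNt : Nᵀ = N := by
      calc Nᵀ = Nᵀ * (M * N) := by rw [hMN, mul_one]
        _ = (Nᵀ * M) * N := by rw [mul_assoc]
        _ = N := by rw [hNtM, one_mul]
    intro a b
    have := congrFun (congrFun hNt a) b
    simpa [Matrix.transpose_apply, hN, Matrix.of_apply] using this.symm
  -- delta lemmas
  have hdel : ∀ l m, (∑ i, ginv i m * g i l) = if l = m then (1:ℝ) else 0 := by
    intro l m
    rw [← hginv l m]
    exact Finset.sum_congr rfl fun i _ => by rw [hgsymm i l, mul_comm]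
  have hdel2 : ∀ a, (∑ l, ginv a l * g a l) = 1 := by
    intro a
    have h : (∑ l, ginv a l * g a l) = ∑ l, g a l * ginv l a := by
      refine Finset.sum_congr rfl fun l _ => ?_
      rw [hginvsymm a l, mul_comm]
    rw [h, hginv a a, if_pos rfl]
  -- contraction of G
  have hRicG : ∀ k l, (∑ i, ∑ m, ginv i m * G k i l m) = (1 - (n:ℝ)) * g k l := by
    intro k l
    have hpt : ∀ i m : Fin n, ginv i m * G k i l m
        = g m k * (ginv i m * g i l) - (g i m * ginv m i) * g k l := by
      intro i m
      rw [hG, hgsymm m i, hginvsymm i m]; ring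
    simp only [hpt, Finset.sum_sub_distrib]
    have h1 : (∑ i, ∑ m, g m k * (ginv i m * g i l)) = g k l := by
      rw [Finset.sum_comm]
      have : ∀ m : Fin n, (∑ i, g m k * (ginv i m * g i l))
          = g m k * (if l = m then (1:ℝ) else 0) := by
        intro m
        rw [← Finset.mul_sum, hdel l m]
      simp only [this, mul_ite, mul_one, mul_zero]
      rw [Finset.sum_ite_eq univ l (fun m => g m k), if_pos (mem_univ l), hgsymm l k]
    have h2 : (∑ i, ∑ m, (g i m * ginv m i) * g k l) = (n:ℝ) * g k l := by
      have : ∀ i : Fin n, (∑ m, (g i m * ginv m i) * g k l) = g k l := by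
        intro i
        rw [← Finset.sum_mul, hginv i i, if_pos rfl, one_mul]
      simp only [this, Finset.sum_const, card_univ, Fintype.card_fin, nsmul_eq_mul]
    rw [h1, h2]; ring
  -- contraction of S = R - ψ G
  have hRicS : ∀ k l, (∑ i, ∑ m, ginv i m * (R k i l m - ψ * G k i l m))
      = Ric k l + ψ * ((n:ℝ) - 1) * g k l := by
    intro k l
    have hpt : ∀ i m : Fin n, ginv i m * (R k i l m - ψ * G k i l m)
        = ginv i m * R k i l m - ψ * (ginv i m * G k i l m) := fun i m => by ring
    simp only [hpt, Finset.sum_sub_distrib, ← Finset.mul_sum]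
    rw [← hRic k l, hRicG k l]; ring
  -- symmetries of S
  have hS1 : ∀ a b c d, R b a c d - ψ * G b a c d = -(R a b c d - ψ * G a b c d) := by
    intro a b c d
    rw [hR1 a b c d, hG a b c d, hG b a c d]; ring
  have hS2 : ∀ a b c d, R a b d c - ψ * G a b d c = -(R a b c d - ψ * G a b c d) := by
    intro a b c d
    rw [hR2 a b c d, hG a b c d, hG a b d c, hgsymm c a, hgsymm b d, hgsymm c b, hgsymm a d]
    ring
  -- quadruple sum reordering
  have hquad : ∀ f : Fin n → Fin n → Fin n → Fin n → ℝ,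
      (∑ a, ∑ l, ∑ k, ∑ m, f a l k m) = ∑ k, ∑ m, ∑ a, ∑ l, f a l k m := by
    intro f
    calc (∑ a, ∑ l, ∑ k, ∑ m, f a l k m)
        = ∑ a, ∑ k, ∑ l, ∑ m, f a l k m :=
          Finset.sum_congr rfl fun a _ => Finset.sum_comm
      _ = ∑ k, ∑ a, ∑ l, ∑ m, f a l k m := Finset.sum_comm
      _ = ∑ k, ∑ a, ∑ m, ∑ l, f a l k m :=
          Finset.sum_congr rfl fun k _ => Finset.sum_congr rfl fun a _ => Finset.sum_comm
      _ = ∑ k, ∑ m, ∑ a, ∑ l, f a l k m :=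
          Finset.sum_congr rfl fun k _ => Finset.sum_comm
  intro j
  -- the three contracted terms
  set c : ℝ := ψ * ((n:ℝ) - 1) with hc
  -- H1
  have H1 : (∑ a, ∑ l, ginv a l * (A j * (∑ k, ∑ m, ginv k m * (R a k l m - ψ * G a k l m))))
      = A j * (Scal + ψ * (n:ℝ) * ((n:ℝ) - 1)) := by
    have hpt : ∀ a l : Fin n, ginv a l * (A j * (∑ k, ∑ m, ginv k m * (R a k l m - ψ * G a k l m)))
        = A j * (ginv a l * Ric a l) + (A j * c) * (ginv a l * g a l) := by
      intro a l
      rw [hRicS a l, hc]; ring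
    simp only [hpt, Finset.sum_add_distrib, ← Finset.mul_sum]
    have htr : (∑ a, ∑ l, ginv a l * g a l) = (n:ℝ) := by
      simp only [hdel2, Finset.sum_const, card_univ, Fintype.card_fin, nsmul_eq_mul, mul_one]
    rw [htr, ← hScal, hc]; ring
  -- H2
  have H2 : (∑ a, ∑ l, ginv a l * (A a * (∑ k, ∑ m, ginv k m * (R k j l m - ψ * G k j l m))))
      = -(∑ l, (Ric j l + c * g j l) * (∑ p, ginv l p * A p)) := by
    have hin : ∀ l : Fin n, (∑ k, ∑ m, ginv k m * (R k j l m - ψ * G k j l m))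
        = -(Ric j l + c * g j l) := by
      intro l
      have : ∀ k m : Fin n, ginv k m * (R k j l m - ψ * G k j l m)
          = -(ginv k m * (R j k l m - ψ * G j k l m)) := by
        intro k m; rw [hS1 j k l m]; ring
      simp only [this, Finset.sum_neg_distrib]
      rw [hRicS j l]
    have hpt : ∀ a l : Fin n, ginv a l * (A a * (∑ k, ∑ m, ginv k m * (R k j l m - ψ * G k j l m)))
        = -((Ric j l + c * g j l) * (ginv l a * A a)) := by
      intro a l
      rw [hin l, hginvsymm a l]; ring
    simp only [hpt]
    rw [Finset.sum_comm]
    simp only [Finset.sum_neg_distrib, ← Finset.mul_sum]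
  -- H3
  have H3 : (∑ a, ∑ l, ∑ k, ∑ m, ginv a l * ginv k m * (A k * (R j a l m - ψ * G j a l m)))
      = -(∑ m, (Ric j m + c * g j m) * (∑ p, ginv m p * A p)) := by
    rw [hquad]
    have hin : ∀ m : Fin n, (∑ a, ∑ l, ginv a l * (R j a m l - ψ * G j a m l))
        = Ric j m + c * g j m := by
      intro m; rw [hRicS j m, hc]
    have hpt : ∀ k m : Fin n, (∑ a, ∑ l, ginv a l * ginv k m * (A k * (R j a l m - ψ * G j a l m)))
        = -((Ric j m + c * g j m) * (ginv m k * A k)) := by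
      intro k m
      have h1 : ∀ a l : Fin n, ginv a l * ginv k m * (A k * (R j a l m - ψ * G j a l m))
          = -((ginv k m * A k) * (ginv a l * (R j a m l - ψ * G j a m l))) := by
        intro a l
        rw [hS2 j a m l]; ring
      simp only [h1, Finset.sum_neg_distrib, ← Finset.mul_sum]
      rw [hin m, hginvsymm k m]; ring
    simp only [hpt]
    rw [Finset.sum_comm]
    simp only [Finset.sum_neg_distrib, ← Finset.mul_sum]
  -- the vanishing quadruple sum
  have hzero : (∑ a, ∑ l, ginv a l * (A j * (∑ k, ∑ m, ginv k m * (R a k l m - ψ * G a k l m))))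
      + (∑ a, ∑ l, ginv a l * (A a * (∑ k, ∑ m, ginv k m * (R k j l m - ψ * G k j l m))))
      + (∑ a, ∑ l, ∑ k, ∑ m, ginv a l * ginv k m * (A k * (R j a l m - ψ * G j a l m))) = 0 := by
    simp only [Finset.mul_sum, ← Finset.sum_add_distrib]
    refine Finset.sum_eq_zero fun a _ => Finset.sum_eq_zero fun l _ => ?_
    refine Finset.sum_eq_zero fun k _ => Finset.sum_eq_zero fun m _ => ?_
    have hb := hB j a k l m
    linear_combination (ginv a l * ginv k m) * hb
  rw [H1, H2, H3] at hzero
  -- g contracted with raised A gives A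
  have hgAU : (∑ m, g j m * (∑ p, ginv m p * A p)) = A j := by
    simp only [Finset.mul_sum]
    rw [Finset.sum_comm]
    have hpt : ∀ p : Fin n, (∑ m, g j m * (ginv m p * A p))
        = (if j = p then (1:ℝ) else 0) * A p := by
      intro p
      rw [← hginv j p, Finset.sum_mul]
      exact Finset.sum_congr rfl fun m _ => by ring
    simp only [hpt, ite_mul, one_mul, zero_mul]
    rw [Finset.sum_ite_eq univ j A, if_pos (mem_univ j)]
  have hsplit : (∑ m, (Ric j m + c * g j m) * (∑ p, ginv m p * A p))
      = (∑ m, Ric j m * (∑ p, ginv m p * A p)) + c * A j := by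
    have hpt : ∀ m : Fin n, (Ric j m + c * g j m) * (∑ p, ginv m p * A p)
        = Ric j m * (∑ p, ginv m p * A p) + c * (g j m * (∑ p, ginv m p * A p)) := by
      intro m; ring
    simp only [hpt, Finset.sum_add_distrib, ← Finset.mul_sum]
    rw [hgAU]
  rw [hsplit] at hzero
  rw [hc] at hzero
  linear_combination (-1/2 : ℝ) * hzero
end

section
/- Suppose a covector A on V and a real number ψ satisfy the Bianchi-type identity A_i (R_{jklm} − ψ G_{jklm}) + A_j (R_{kilm} − ψ G_{kilm}) + A_k (R_{ijlm} − ψ G_{ijlm}) = 0 for all indices, where R is a curvature-like tensor on (V,g). Then A^m C_{jklm} = ((n−3)/(n−2)) [ A_k ( Ric_{jl} − ((Scal − ψ(n−1)(n−2))/(2(n−1))) g_{jl} ) − A_j ( Ric_{kl} − ((Scal − ψ(n−1)(n−2))/(2(n−1))) g_{kl} ) ] for all j,k,l, where C is the Weyl tensor of R. -/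
open Finset

open Matrix in
lemma aux_inv (n : ℕ) (g ginv : Fin n → Fin n → ℝ)
    (hgsymm : ∀ i j, g i j = g j i)
    (hginv : ∀ i j, ∑ k, g i k * ginv k j = if i = j then (1:ℝ) else 0) :
    (∀ i j, ∑ k, ginv i k * g k j = if i = j then (1:ℝ) else 0)
      ∧ (∀ i j, ginv i j = ginv j i) := by
  have hMN : (Matrix.of g) * (Matrix.of ginv) = 1 := by
    ext i j
    simpa [Matrix.mul_apply, Matrix.one_apply] using hginv i j
  have hNM : (Matrix.of ginv) * (Matrix.of g) = 1 := mul_eq_one_comm.mp hMN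
  have hMsymm : (Matrix.of g)ᵀ = Matrix.of g := by
    ext i j; simp [Matrix.transpose_apply, hgsymm i j]
  have hNT : (Matrix.of ginv)ᵀ * (Matrix.of g) = 1 := by
    have := congrArg Matrix.transpose hMN
    rw [Matrix.transpose_mul, hMsymm, Matrix.transpose_one] at this
    exact this
  have hNsymm : (Matrix.of ginv)ᵀ = Matrix.of ginv := by
    calc (Matrix.of ginv)ᵀ = (Matrix.of ginv)ᵀ * ((Matrix.of g) * (Matrix.of ginv)) := by
          rw [hMN, mul_one]
    _ = ((Matrix.of ginv)ᵀ * (Matrix.of g)) * (Matrix.of ginv) := by rw [mul_assoc]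
    _ = Matrix.of ginv := by rw [hNT, one_mul]
  constructor
  · intro i j
    have := congrFun (congrFun hNM i) j
    simpa [Matrix.mul_apply, Matrix.one_apply] using this
  · intro i j
    have := congrFun (congrFun hNsymm j) i
    simpa [Matrix.transpose_apply] using this

theorem stmt_2 (n : ℕ) (hn : 3 ≤ n)
    (g ginv : Fin n → Fin n → ℝ)
    (hgsymm : ∀ i j, g i j = g j i)
    (hginv : ∀ i j, ∑ k, g i k * ginv k j = if i = j then (1:ℝ) else 0)
    (R : Fin n → Fin n → Fin n → Fin n → ℝ)
    (hR1 : ∀ j k l m, R j k l m = - R k j l m)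
    (hR2 : ∀ j k l m, R j k l m = - R j k m l)
    (hR3 : ∀ j k l m, R j k l m = R l m j k)
    (hR4 : ∀ j k l m, R j k l m + R k l j m + R l j k m = 0)
    (G : Fin n → Fin n → Fin n → Fin n → ℝ)
    (hG : ∀ j k l m, G j k l m = g m j * g k l - g m k * g j l)
    (Ric : Fin n → Fin n → ℝ)
    (hRic : ∀ k l, Ric k l = ∑ i, ∑ m, ginv i m * R k i l m)
    (Scal : ℝ)
    (hScal : Scal = ∑ k, ∑ l, ginv k l * Ric k l)
    (C : Fin n → Fin n → Fin n → Fin n → ℝ)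
    (hC : ∀ j k l m, C j k l m = R j k l m
      + (1 / ((n:ℝ) - 2)) * (g j m * Ric k l - g k m * Ric j l
          + Ric j m * g k l - Ric k m * g j l)
      - (Scal / (((n:ℝ) - 1) * ((n:ℝ) - 2))) * (g j m * g k l - g k m * g j l))
    (A : Fin n → ℝ) (ψ : ℝ)
    (hB : ∀ i j k l m,
      A i * (R j k l m - ψ * G j k l m) + A j * (R k i l m - ψ * G k i l m)
        + A k * (R i j l m - ψ * G i j l m) = 0) :
    ∀ j k l, (∑ m, (∑ p, ginv m p * A p) * C j k l m)
      = (((n:ℝ) - 3) / ((n:ℝ) - 2)) *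
        (A k * (Ric j l - ((Scal - ψ * ((n:ℝ) - 1) * ((n:ℝ) - 2)) / (2 * ((n:ℝ) - 1))) * g j l)
          - A j * (Ric k l - ((Scal - ψ * ((n:ℝ) - 1) * ((n:ℝ) - 2)) / (2 * ((n:ℝ) - 1))) * g k l)) := by
  obtain ⟨hginv', hginvsymm⟩ := aux_inv n g ginv hgsymm hginv
  -- trace fact
  have htrace : (∑ i : Fin n, ∑ m, ginv i m * g m i) = (n:ℝ) := by
    have e : ∀ i : Fin n, (∑ m, ginv i m * g m i) = 1 := by
      intro i; rw [hginv' i i]; simp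
    simp [e]
  -- contraction of sharp A against g
  have h1 : ∀ j, (∑ m, (∑ p, ginv m p * A p) * g m j) = A j := by
    intro j
    have step : (∑ m, (∑ p, ginv m p * A p) * g m j)
        = ∑ p, A p * (∑ m, ginv p m * g m j) := by
      simp only [Finset.sum_mul]
      rw [Finset.sum_comm]
      refine Finset.sum_congr rfl fun p _ => ?_
      rw [Finset.mul_sum]
      refine Finset.sum_congr rfl fun m _ => ?_
      rw [hginvsymm m p]; ring
    rw [step]
    simp [hginv']
  -- Ricci of G
  have hRicG : ∀ k l, (∑ i, ∑ m, ginv i m * G k i l m) = (1 - (n:ℝ)) * g k l := by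
    intro k l
    have step : (∑ i, ∑ m, ginv i m * G k i l m)
        = ∑ i : Fin n, (g i l * (∑ m, ginv i m * g m k) - g k l * (∑ m, ginv i m * g m i)) := by
      refine Finset.sum_congr rfl fun i _ => ?_
      rw [Finset.mul_sum, Finset.mul_sum, ← Finset.sum_sub_distrib]
      refine Finset.sum_congr rfl fun m _ => ?_
      rw [hG]; ring
    rw [step]
    rw [Finset.sum_sub_distrib]
    have e1 : (∑ i : Fin n, g i l * (∑ m, ginv i m * g m k)) = g k l := by
      have e : ∀ i : Fin n, g i l * (∑ m, ginv i m * g m k)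
          = g i l * (if i = k then (1:ℝ) else 0) := fun i => by rw [hginv']
      simp only [e]
      simp [hgsymm]
    have e2 : (∑ i : Fin n, g k l * (∑ m, ginv i m * g m i)) = (n:ℝ) * g k l := by
      rw [← Finset.mul_sum, htrace]; ring
    rw [e1, e2]; ring
  -- Ric symmetric
  have hRicSymm : ∀ k l, Ric k l = Ric l k := by
    intro k l
    rw [hRic, hRic, Finset.sum_comm]
    exact Finset.sum_congr rfl fun m _ => Finset.sum_congr rfl fun i _ => by
      rw [hginvsymm, hR3]
  -- antisymmetry of T = R - ψ G in first two indices
  have hTanti : ∀ i j l m, (R i j l m - ψ * G i j l m) = -(R j i l m - ψ * G j i l m) := by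
    intro i j l m
    rw [hR1 i j l m, hG i j l m, hG j i l m]; ring
  -- "Ricci" of T in slots (2,4)
  have hS2body : ∀ k l, (∑ i, ∑ m, ginv i m * (R k i l m - ψ * G k i l m))
      = Ric k l + ψ * ((n:ℝ) - 1) * g k l := by
    intro k l
    have step : (∑ i, ∑ m, ginv i m * (R k i l m - ψ * G k i l m))
        = (∑ i, ∑ m, ginv i m * R k i l m) - ψ * (∑ i, ∑ m, ginv i m * G k i l m) := by
      rw [Finset.mul_sum, ← Finset.sum_sub_distrib]
      refine Finset.sum_congr rfl fun i _ => ?_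
      rw [Finset.mul_sum, ← Finset.sum_sub_distrib]
      refine Finset.sum_congr rfl fun m _ => ?_
      ring
    rw [step, ← hRic, hRicG]; ring
  -- contracted Bianchi identity
  have hBc : ∀ j k l, (∑ m, (∑ p, ginv m p * A p) * (R j k l m - ψ * G j k l m))
      = A k * (Ric j l + ψ * ((n:ℝ) - 1) * g j l)
        - A j * (Ric k l + ψ * ((n:ℝ) - 1) * g k l) := by
    intro j k l
    have e0 : (∑ i, ∑ m, ginv i m * (A i * (R j k l m - ψ * G j k l m)))
        + (∑ i, ∑ m, ginv i m * (A j * (R k i l m - ψ * G k i l m)))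
        + (∑ i, ∑ m, ginv i m * (A k * (R i j l m - ψ * G i j l m))) = 0 := by
      have e : (∑ i, ∑ m, (ginv i m * (A i * (R j k l m - ψ * G j k l m))
          + ginv i m * (A j * (R k i l m - ψ * G k i l m))
          + ginv i m * (A k * (R i j l m - ψ * G i j l m)))) = 0 := by
        refine Finset.sum_eq_zero fun i _ => Finset.sum_eq_zero fun m _ => ?_
        linear_combination ginv i m * hB i j k l m
      rw [← e]
      simp [Finset.sum_add_distrib]
    have hS1 : (∑ i, ∑ m, ginv i m * (A i * (R j k l m - ψ * G j k l m)))
        = ∑ m, (∑ p, ginv m p * A p) * (R j k l m - ψ * G j k l m) := by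
      rw [Finset.sum_comm]
      refine Finset.sum_congr rfl fun m _ => ?_
      rw [Finset.sum_mul]
      refine Finset.sum_congr rfl fun p _ => ?_
      rw [hginvsymm]; ring
    have hS2 : (∑ i, ∑ m, ginv i m * (A j * (R k i l m - ψ * G k i l m)))
        = A j * (Ric k l + ψ * ((n:ℝ) - 1) * g k l) := by
      rw [← hS2body k l, Finset.mul_sum]
      refine Finset.sum_congr rfl fun i _ => ?_
      rw [Finset.mul_sum]
      refine Finset.sum_congr rfl fun m _ => ?_
      ring
    have hS3 : (∑ i, ∑ m, ginv i m * (A k * (R i j l m - ψ * G i j l m)))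
        = - (A k * (Ric j l + ψ * ((n:ℝ) - 1) * g j l)) := by
      have step : (∑ i, ∑ m, ginv i m * (A k * (R i j l m - ψ * G i j l m)))
          = - (A k * (∑ i, ∑ m, ginv i m * (R j i l m - ψ * G j i l m))) := by
        rw [Finset.mul_sum, ← Finset.sum_neg_distrib]
        refine Finset.sum_congr rfl fun i _ => ?_
        rw [Finset.mul_sum, ← Finset.sum_neg_distrib]
        refine Finset.sum_congr rfl fun m _ => ?_
        rw [hTanti i j l m]; ring
      rw [step, hS2body]
    rw [hS1, hS2, hS3] at e0
    linarith
  -- A sharp contracted with R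
  have hstar : ∀ j k l, (∑ m, (∑ p, ginv m p * A p) * R j k l m)
      = A k * (Ric j l + ψ * ((n:ℝ) - 1) * g j l)
        - A j * (Ric k l + ψ * ((n:ℝ) - 1) * g k l)
        + ψ * (A j * g k l - A k * g j l) := by
    intro j k l
    have split : (∑ m, (∑ p, ginv m p * A p) * (R j k l m - ψ * G j k l m))
        = (∑ m, (∑ p, ginv m p * A p) * R j k l m)
          - ψ * (∑ m, (∑ p, ginv m p * A p) * G j k l m) := by
      rw [Finset.mul_sum, ← Finset.sum_sub_distrib]
      exact Finset.sum_congr rfl fun m _ => by ring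
    have hAG : (∑ m, (∑ p, ginv m p * A p) * G j k l m) = A j * g k l - A k * g j l := by
      have point : ∀ m, (∑ p, ginv m p * A p) * G j k l m
          = g k l * ((∑ p, ginv m p * A p) * g m j)
            - g j l * ((∑ p, ginv m p * A p) * g m k) := fun m => by rw [hG]; ring
      calc (∑ m, (∑ p, ginv m p * A p) * G j k l m)
          = ∑ m, (g k l * ((∑ p, ginv m p * A p) * g m j)
              - g j l * ((∑ p, ginv m p * A p) * g m k)) :=
            Finset.sum_congr rfl fun m _ => point m
        _ = g k l * (∑ m, (∑ p, ginv m p * A p) * g m j)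
              - g j l * (∑ m, (∑ p, ginv m p * A p) * g m k) := by
            rw [Finset.sum_sub_distrib, Finset.mul_sum, Finset.mul_sum]
        _ = A j * g k l - A k * g j l := by rw [h1, h1]; ring
    have e := hBc j k l
    rw [split, hAG] at e
    linarith
  -- contraction of R in slots (2,3) per outer index
  have hcontr23 : ∀ k m, (∑ j, ∑ l, ginv j l * R j k l m) = Ric m k := by
    intro k m
    rw [hRic, Finset.sum_comm]
    refine Finset.sum_congr rfl fun l _ => Finset.sum_congr rfl fun j _ => ?_
    rw [hginvsymm j l]
    congr 1
    rw [hR3 j k l m, hR1 l m j k, hR2 m l j k]; ring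
  -- trace of ginv against g (other index position)
  have c2 : (∑ j, ∑ l, ginv j l * g j l) = (n:ℝ) := by
    have e : ∀ j : Fin n, (∑ l, ginv j l * g j l) = 1 := by
      intro j
      have e2 : (∑ l, ginv j l * g j l) = ∑ l, ginv j l * g l j :=
        Finset.sum_congr rfl fun l _ => by rw [hgsymm j l]
      rw [e2, hginv' j j]; simp
    simp [e]
  -- A sharp contracted with Ric
  have hARic : ∀ k, (∑ m, (∑ p, ginv m p * A p) * Ric k m)
      = A k * (Scal + ψ * ((n:ℝ) - 1) * ((n:ℝ) - 2)) / 2 := by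
    intro k
    have c3 : (∑ j, ∑ l, (ginv j l * A j) * Ric k l)
        = ∑ m, (∑ p, ginv m p * A p) * Ric k m := by
      rw [Finset.sum_comm]
      refine Finset.sum_congr rfl fun l _ => ?_
      rw [show (∑ p, ginv l p * A p) * Ric k l = ∑ p, (ginv l p * A p) * Ric k l from
        Finset.sum_mul ..]
      refine Finset.sum_congr rfl fun j _ => by rw [hginvsymm j l]
    have c4 : (∑ j, ∑ l, (ginv j l * A j) * g k l) = A k := by
      rw [Finset.sum_comm]
      have e : ∀ l, (∑ j, (ginv j l * A j) * g k l)
          = (∑ p, ginv l p * A p) * g l k := by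
        intro l
        rw [show (∑ p, ginv l p * A p) * g l k = ∑ p, (ginv l p * A p) * g l k from
          Finset.sum_mul ..]
        refine Finset.sum_congr rfl fun j _ => by rw [hginvsymm j l, hgsymm k l]
      rw [Finset.sum_congr rfl fun l _ => e l]
      exact h1 k
    have eqL : (∑ j, ∑ l, ginv j l * (∑ m, (∑ p, ginv m p * A p) * R j k l m))
        = ∑ m, (∑ p, ginv m p * A p) * Ric k m := by
      have s1 : ∀ j, (∑ l, ginv j l * (∑ m, (∑ p, ginv m p * A p) * R j k l m))
          = ∑ m, ∑ l, (∑ p, ginv m p * A p) * (ginv j l * R j k l m) := by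
        intro j
        rw [← Finset.sum_comm]
        refine Finset.sum_congr rfl fun l _ => ?_
        rw [Finset.mul_sum]
        exact Finset.sum_congr rfl fun m _ => by ring
      rw [Finset.sum_congr rfl fun j _ => s1 j, Finset.sum_comm]
      refine Finset.sum_congr rfl fun m _ => ?_
      rw [hRicSymm k m, ← hcontr23 k m, Finset.mul_sum]
      exact Finset.sum_congr rfl fun j _ => by rw [Finset.mul_sum]
    have point : ∀ j l, ginv j l * (∑ m, (∑ p, ginv m p * A p) * R j k l m)
        = A k * (ginv j l * Ric j l) + (A k * (ψ * ((n:ℝ) - 1))) * (ginv j l * g j l)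
          - (ginv j l * A j) * Ric k l - (ψ * ((n:ℝ) - 1)) * ((ginv j l * A j) * g k l)
          + ψ * ((ginv j l * A j) * g k l) - (ψ * A k) * (ginv j l * g j l) := by
      intro j l; rw [hstar j k l]; ring
    have expand : (∑ j, ∑ l, ginv j l * (∑ m, (∑ p, ginv m p * A p) * R j k l m))
        = A k * (∑ j, ∑ l, ginv j l * Ric j l)
          + (A k * (ψ * ((n:ℝ) - 1))) * (∑ j, ∑ l, ginv j l * g j l)
          - (∑ j, ∑ l, (ginv j l * A j) * Ric k l)
          - (ψ * ((n:ℝ) - 1)) * (∑ j, ∑ l, (ginv j l * A j) * g k l)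
          + ψ * (∑ j, ∑ l, (ginv j l * A j) * g k l)
          - (ψ * A k) * (∑ j, ∑ l, ginv j l * g j l) := by
      rw [Finset.sum_congr rfl fun j _ => Finset.sum_congr rfl fun l _ => point j l]
      simp only [Finset.sum_add_distrib, Finset.sum_sub_distrib, ← Finset.mul_sum]
    rw [eqL] at expand
    rw [← hScal, c2, c3, c4] at expand
    linear_combination (1/2 : ℝ) * expand
  -- final assembly
  intro j k l
  have hCx : (∑ m, (∑ p, ginv m p * A p) * C j k l m)
      = (∑ m, (∑ p, ginv m p * A p) * R j k l m)
        + (1 / ((n:ℝ) - 2)) * (Ric k l * (∑ m, (∑ p, ginv m p * A p) * g m j)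
            - Ric j l * (∑ m, (∑ p, ginv m p * A p) * g m k)
            + g k l * (∑ m, (∑ p, ginv m p * A p) * Ric j m)
            - g j l * (∑ m, (∑ p, ginv m p * A p) * Ric k m))
        - (Scal / (((n:ℝ) - 1) * ((n:ℝ) - 2)))
            * (g k l * (∑ m, (∑ p, ginv m p * A p) * g m j)
              - g j l * (∑ m, (∑ p, ginv m p * A p) * g m k)) := by
    have point : ∀ m, (∑ p, ginv m p * A p) * C j k l m
        = (∑ p, ginv m p * A p) * R j k l m
          + (1 / ((n:ℝ) - 2)) * (Ric k l * ((∑ p, ginv m p * A p) * g m j)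
              - Ric j l * ((∑ p, ginv m p * A p) * g m k)
              + g k l * ((∑ p, ginv m p * A p) * Ric j m)
              - g j l * ((∑ p, ginv m p * A p) * Ric k m))
          - (Scal / (((n:ℝ) - 1) * ((n:ℝ) - 2)))
              * (g k l * ((∑ p, ginv m p * A p) * g m j)
                - g j l * ((∑ p, ginv m p * A p) * g m k)) := by
      intro m; rw [hC j k l m, hgsymm j m, hgsymm k m]; ring
    rw [Finset.sum_congr rfl fun m _ => point m]
    simp only [Finset.sum_add_distrib, Finset.sum_sub_distrib, ← Finset.mul_sum]
  rw [hCx, hstar j k l, h1 j, h1 k, hARic j, hARic k]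
  have h3n : (3:ℝ) ≤ (n:ℝ) := by exact_mod_cast hn
  have hn1 : ((n:ℝ) - 1) ≠ 0 := by intro h; linarith
  have hn2 : ((n:ℝ) - 2) ≠ 0 := by intro h; linarith
  field_simp
  ring
end

section
/- Suppose n > 3, and a covector A on V and a real number ψ satisfy the Bianchi-type identity A_i (R_{jklm} − ψ G_{jklm}) + A_j (R_{kilm} − ψ G_{kilm}) + A_k (R_{ijlm} − ψ G_{ijlm}) = 0 for all indices, where R is a curvature-like tensor on (V,g). Then A^m C_{jklm} = 0 for all j,k,l if and only if A_j ( Ric_{kl} − g_{kl} (Scal − ψ(n−1)(n−2))/(2(n−1)) ) = A_k ( Ric_{jl} − g_{jl} (Scal − ψ(n−1)(n−2))/(2(n−1)) ) for all j,k,l, where C is the Weyl tensor of R. -/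
open Finset

theorem stmt_3 (n : ℕ) (hn : 3 ≤ n)
    (g ginv : Fin n → Fin n → ℝ)
    (hgsymm : ∀ i j, g i j = g j i)
    (hginv : ∀ i j, ∑ k, g i k * ginv k j = if i = j then (1:ℝ) else 0) (hn3 : 3 < n)
    (R : Fin n → Fin n → Fin n → Fin n → ℝ)
    (hR1 : ∀ j k l m, R j k l m = - R k j l m)
    (hR2 : ∀ j k l m, R j k l m = - R j k m l)
    (hR3 : ∀ j k l m, R j k l m = R l m j k)
    (hR4 : ∀ j k l m, R j k l m + R k l j m + R l j k m = 0)
    (G : Fin n → Fin n → Fin n → Fin n → ℝ)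
    (hG : ∀ j k l m, G j k l m = g m j * g k l - g m k * g j l)
    (Ric : Fin n → Fin n → ℝ)
    (hRic : ∀ k l, Ric k l = ∑ i, ∑ m, ginv i m * R k i l m)
    (Scal : ℝ)
    (hScal : Scal = ∑ k, ∑ l, ginv k l * Ric k l)
    (C : Fin n → Fin n → Fin n → Fin n → ℝ)
    (hC : ∀ j k l m, C j k l m = R j k l m
      + (1 / ((n:ℝ) - 2)) * (g j m * Ric k l - g k m * Ric j l
          + Ric j m * g k l - Ric k m * g j l)
      - (Scal / (((n:ℝ) - 1) * ((n:ℝ) - 2))) * (g j m * g k l - g k m * g j l))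
    (A : Fin n → ℝ) (ψ : ℝ)
    (hB : ∀ i j k l m,
      A i * (R j k l m - ψ * G j k l m) + A j * (R k i l m - ψ * G k i l m)
        + A k * (R i j l m - ψ * G i j l m) = 0) :
    (∀ j k l, (∑ m, (∑ p, ginv m p * A p) * C j k l m) = 0) ↔
      (∀ j k l, A j * (Ric k l - g k l * ((Scal - ψ * ((n:ℝ) - 1) * ((n:ℝ) - 2)) / (2 * ((n:ℝ) - 1))))
        = A k * (Ric j l - g j l * ((Scal - ψ * ((n:ℝ) - 1) * ((n:ℝ) - 2)) / (2 * ((n:ℝ) - 1))))) := by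
  -- numeric facts
  have h4 : (4:ℝ) ≤ (n:ℝ) := by exact_mod_cast hn3
  have h1 : ((n:ℝ) - 1) ≠ 0 := by intro h; linarith
  have h2 : ((n:ℝ) - 2) ≠ 0 := by intro h; linarith
  have h3 : ((3:ℝ) - (n:ℝ)) ≠ 0 := by intro h; linarith
  -- matrix facts
  have hgi : ∀ i j, ∑ k, ginv i k * g k j = if i = j then (1:ℝ) else 0 := by
    have hMN : (Matrix.of g) * (Matrix.of ginv) = 1 := by
      ext i j; simp [Matrix.mul_apply, hginv, Matrix.one_apply]
    have hNM : (Matrix.of ginv) * (Matrix.of g) = 1 := mul_eq_one_comm.mp hMN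
    intro i j
    have := congrFun (congrFun hNM i) j
    simpa [Matrix.mul_apply, Matrix.one_apply] using this
  have hiS : ∀ i j, ginv i j = ginv j i := by
    have hMN : (Matrix.of g) * (Matrix.of ginv) = 1 := by
      ext i j; simp [Matrix.mul_apply, hginv, Matrix.one_apply]
    have hMsymm : (Matrix.of g).transpose = Matrix.of g := by
      ext i j; simp [Matrix.transpose_apply, hgsymm i j]
    have hNt : (Matrix.of ginv).transpose * (Matrix.of g) = 1 := by
      calc (Matrix.of ginv).transpose * (Matrix.of g)
          = ((Matrix.of g) * (Matrix.of ginv)).transpose := by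
            rw [Matrix.transpose_mul, hMsymm]
        _ = 1 := by rw [hMN]; simp
    have hNsymm : (Matrix.of ginv).transpose = Matrix.of ginv := by
      calc (Matrix.of ginv).transpose
          = (Matrix.of ginv).transpose * ((Matrix.of g) * (Matrix.of ginv)) := by
            rw [hMN, mul_one]
        _ = ((Matrix.of ginv).transpose * (Matrix.of g)) * (Matrix.of ginv) := by
            rw [mul_assoc]
        _ = Matrix.of ginv := by rw [hNt, one_mul]
    intro i j
    have := congrFun (congrFun hNsymm j) i
    simpa [Matrix.transpose_apply] using this
  -- contraction helpers
  have key1 : ∀ a b : Fin n, ∑ i, ∑ m, ginv i m * (g m a * g i b) = g a b := by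
    intro a b
    calc ∑ i, ∑ m, ginv i m * (g m a * g i b)
        = ∑ i, (∑ m, ginv i m * g m a) * g i b := by
          refine sum_congr rfl fun i _ => ?_
          rw [Finset.sum_mul]
          exact sum_congr rfl fun m _ => by ring
      _ = ∑ i, (if i = a then (1:ℝ) else 0) * g i b := by
          refine sum_congr rfl fun i _ => ?_; rw [hgi]
      _ = g a b := by simp
  have key2 : ∀ (c : ℝ), ∑ i, ∑ m, ginv i m * (g m i * c) = (n:ℝ) * c := by
    intro c
    calc ∑ i, ∑ m, ginv i m * (g m i * c)
        = ∑ i, (∑ m, ginv i m * g m i) * c := by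
          refine sum_congr rfl fun i _ => ?_
          rw [Finset.sum_mul]
          exact sum_congr rfl fun m _ => by ring
      _ = ∑ _i : Fin n, (1:ℝ) * c := by
          refine sum_congr rfl fun i _ => ?_
          rw [hgi]; simp
      _ = (n:ℝ) * c := by simp
  -- A contraction with metric
  have hAg : ∀ a : Fin n, ∑ m, (∑ p, ginv m p * A p) * g m a = A a := by
    intro a
    calc ∑ m, (∑ p, ginv m p * A p) * g m a
        = ∑ m, ∑ p, g a m * ginv m p * A p := by
          refine sum_congr rfl fun m _ => ?_
          rw [Finset.sum_mul]
          refine sum_congr rfl fun p _ => ?_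
          rw [hgsymm m a]; ring
      _ = ∑ p, ∑ m, g a m * ginv m p * A p := Finset.sum_comm
      _ = ∑ p, (if a = p then (1:ℝ) else 0) * A p := by
          refine sum_congr rfl fun p _ => ?_
          rw [← Finset.sum_mul, hginv]
      _ = A a := by simp
  have hAg2 : ∀ a : Fin n, ∑ m, (∑ p, ginv m p * A p) * g a m = A a := by
    intro a
    rw [← hAg a]
    exact sum_congr rfl fun m _ => by rw [hgsymm a m]
  -- Ricci symmetry
  have hRicS : ∀ k l, Ric k l = Ric l k := by
    intro k l
    rw [hRic, hRic]
    calc ∑ i, ∑ m, ginv i m * R k i l m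
        = ∑ i, ∑ m, ginv m i * R l m k i := by
          refine sum_congr rfl fun i _ => sum_congr rfl fun m _ => ?_
          rw [hR3 k i l m, hiS i m]
      _ = ∑ i, ∑ m, ginv i m * R l i k m := Finset.sum_comm
  -- contraction of the Bianchi-type identity
  have hstar : ∀ j k l, ∑ m, (∑ p, ginv m p * A p) * (R j k l m - ψ * G j k l m)
      = A k * (Ric j l + ψ * ((n:ℝ) - 1) * g j l) - A j * (Ric k l + ψ * ((n:ℝ) - 1) * g k l) := by
    intro j k l
    have h0 : (∑ i, ∑ m, ginv i m * (A i * (R j k l m - ψ * G j k l m)))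
        + (∑ i, ∑ m, ginv i m * (A j * (R k i l m - ψ * G k i l m)))
        + (∑ i, ∑ m, ginv i m * (A k * (R i j l m - ψ * G i j l m))) = 0 := by
      simp only [← Finset.sum_add_distrib]
      refine Finset.sum_eq_zero fun i _ => Finset.sum_eq_zero fun m _ => ?_
      rw [← mul_add, ← mul_add, hB i j k l m, mul_zero]
    have e1 : ∑ i, ∑ m, ginv i m * (A i * (R j k l m - ψ * G j k l m))
        = ∑ m, (∑ p, ginv m p * A p) * (R j k l m - ψ * G j k l m) := by
      rw [Finset.sum_comm]
      refine sum_congr rfl fun m _ => ?_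
      rw [Finset.sum_mul]
      refine sum_congr rfl fun i _ => ?_
      rw [hiS m i]; ring
    have e2 : ∑ i, ∑ m, ginv i m * (A j * (R k i l m - ψ * G k i l m))
        = A j * (Ric k l + ψ * ((n:ℝ) - 1) * g k l) := by
      have c2 : ∑ i, ∑ m, ginv i m * G k i l m = (1 - (n:ℝ)) * g k l := by
        calc ∑ i, ∑ m, ginv i m * G k i l m
            = ∑ i, ∑ m, (ginv i m * (g m k * g i l) - ginv i m * (g m i * g k l)) := by
              refine sum_congr rfl fun i _ => sum_congr rfl fun m _ => ?_
              rw [hG]; ring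
          _ = (∑ i, ∑ m, ginv i m * (g m k * g i l)) - (∑ i, ∑ m, ginv i m * (g m i * g k l)) := by
              simp only [Finset.sum_sub_distrib]
          _ = g k l - (n:ℝ) * g k l := by rw [key1 k l, key2 (g k l)]
          _ = (1 - (n:ℝ)) * g k l := by ring
      calc ∑ i, ∑ m, ginv i m * (A j * (R k i l m - ψ * G k i l m))
          = ∑ i, ∑ m, (A j * (ginv i m * R k i l m) - (A j * ψ) * (ginv i m * G k i l m)) := by
            refine sum_congr rfl fun i _ => sum_congr rfl fun m _ => ?_; ring
        _ = A j * (∑ i, ∑ m, ginv i m * R k i l m) - (A j * ψ) * (∑ i, ∑ m, ginv i m * G k i l m) := by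
            simp only [Finset.sum_sub_distrib, ← Finset.mul_sum]
        _ = A j * (Ric k l + ψ * ((n:ℝ) - 1) * g k l) := by
            rw [← hRic, c2]; ring
    have e3 : ∑ i, ∑ m, ginv i m * (A k * (R i j l m - ψ * G i j l m))
        = -(A k * (Ric j l + ψ * ((n:ℝ) - 1) * g j l)) := by
      have c3 : ∑ i, ∑ m, ginv i m * R i j l m = -(Ric j l) := by
        calc ∑ i, ∑ m, ginv i m * R i j l m
            = ∑ i, ∑ m, -(ginv i m * R j i l m) := by
              refine sum_congr rfl fun i _ => sum_congr rfl fun m _ => ?_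
              rw [hR1 i j l m]; ring
          _ = -∑ i, ∑ m, ginv i m * R j i l m := by simp
          _ = -(Ric j l) := by rw [← hRic]
      have c4 : ∑ i, ∑ m, ginv i m * G i j l m = ((n:ℝ) - 1) * g j l := by
        calc ∑ i, ∑ m, ginv i m * G i j l m
            = ∑ i, ∑ m, (ginv i m * (g m i * g j l) - ginv i m * (g m j * g i l)) := by
              refine sum_congr rfl fun i _ => sum_congr rfl fun m _ => ?_
              rw [hG]; ring
          _ = (∑ i, ∑ m, ginv i m * (g m i * g j l)) - (∑ i, ∑ m, ginv i m * (g m j * g i l)) := by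
              simp only [Finset.sum_sub_distrib]
          _ = (n:ℝ) * g j l - g j l := by rw [key2 (g j l), key1 j l]
          _ = ((n:ℝ) - 1) * g j l := by ring
      calc ∑ i, ∑ m, ginv i m * (A k * (R i j l m - ψ * G i j l m))
          = ∑ i, ∑ m, (A k * (ginv i m * R i j l m) - (A k * ψ) * (ginv i m * G i j l m)) := by
            refine sum_congr rfl fun i _ => sum_congr rfl fun m _ => ?_; ring
        _ = A k * (∑ i, ∑ m, ginv i m * R i j l m) - (A k * ψ) * (∑ i, ∑ m, ginv i m * G i j l m) := by
            simp only [Finset.sum_sub_distrib, ← Finset.mul_sum]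
        _ = -(A k * (Ric j l + ψ * ((n:ℝ) - 1) * g j l)) := by
            rw [c3, c4]; ring
    rw [e1, e2, e3] at h0
    linarith
  -- pair-flip of R
  have hRflip : ∀ j k l m, R j k l m = R m l k j := by
    intro j k l m
    rw [hR3 j k l m, hR1 l m j k, hR2 m l j k]; ring
  -- second contraction pattern
  have hL4a : ∀ k m, ∑ j, ∑ l, ginv j l * R j k l m = Ric k m := by
    intro k m
    calc ∑ j, ∑ l, ginv j l * R j k l m
        = ∑ j, ∑ l, ginv l j * R m l k j := by
          refine sum_congr rfl fun j _ => sum_congr rfl fun l _ => ?_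
          rw [hRflip j k l m, hiS j l]
      _ = ∑ l, ∑ j, ginv l j * R m l k j := Finset.sum_comm
      _ = Ric m k := (hRic m k).symm
      _ = Ric k m := (hRicS m k)
  have hL4G : ∀ k m, ∑ j, ∑ l, ginv j l * G j k l m = (1 - (n:ℝ)) * g k m := by
    intro k m
    calc ∑ j, ∑ l, ginv j l * G j k l m
        = ∑ j, ∑ l, (ginv j l * (g l k * g j m) - ginv j l * (g l j * g m k)) := by
          refine sum_congr rfl fun j _ => sum_congr rfl fun l _ => ?_
          rw [hG, hgsymm m j, hgsymm k l, hgsymm j l]; ring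
      _ = (∑ j, ∑ l, ginv j l * (g l k * g j m)) - (∑ j, ∑ l, ginv j l * (g l j * g m k)) := by
          simp only [Finset.sum_sub_distrib]
      _ = g k m - (n:ℝ) * g m k := by rw [key1 k m, key2 (g m k)]
      _ = (1 - (n:ℝ)) * g k m := by rw [hgsymm m k]; ring
  have hL4T : ∀ k m, ∑ j, ∑ l, ginv j l * (R j k l m - ψ * G j k l m)
      = Ric k m + ψ * ((n:ℝ) - 1) * g k m := by
    intro k m
    calc ∑ j, ∑ l, ginv j l * (R j k l m - ψ * G j k l m)
        = ∑ j, ∑ l, (ginv j l * R j k l m - ψ * (ginv j l * G j k l m)) := by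
          refine sum_congr rfl fun j _ => sum_congr rfl fun l _ => ?_; ring
      _ = (∑ j, ∑ l, ginv j l * R j k l m) - ψ * (∑ j, ∑ l, ginv j l * G j k l m) := by
          simp only [Finset.sum_sub_distrib, ← Finset.mul_sum]
      _ = Ric k m + ψ * ((n:ℝ) - 1) * g k m := by
          rw [hL4a k m, hL4G k m]; ring
  -- triple sum swap
  have swap3 : ∀ (F : Fin n → Fin n → Fin n → ℝ),
      ∑ m, (∑ p, ginv m p * A p) * (∑ j, ∑ l, ginv j l * F j l m)
        = ∑ j, ∑ l, ginv j l * (∑ m, (∑ p, ginv m p * A p) * F j l m) := by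
    intro F
    calc ∑ m, (∑ p, ginv m p * A p) * (∑ j, ∑ l, ginv j l * F j l m)
        = ∑ m, ∑ j, ∑ l, (∑ p, ginv m p * A p) * (ginv j l * F j l m) := by
          refine sum_congr rfl fun m _ => ?_
          rw [Finset.mul_sum]
          exact sum_congr rfl fun j _ => by rw [Finset.mul_sum]
      _ = ∑ j, ∑ m, ∑ l, (∑ p, ginv m p * A p) * (ginv j l * F j l m) := Finset.sum_comm
      _ = ∑ j, ∑ l, ∑ m, (∑ p, ginv m p * A p) * (ginv j l * F j l m) := by
          exact sum_congr rfl fun j _ => Finset.sum_comm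
      _ = ∑ j, ∑ l, ginv j l * (∑ m, (∑ p, ginv m p * A p) * F j l m) := by
          refine sum_congr rfl fun j _ => sum_congr rfl fun l _ => ?_
          rw [Finset.mul_sum]
          exact sum_congr rfl fun m _ => by ring
  -- contraction of A with Ricci
  have hARic : ∀ k, ∑ m, (∑ p, ginv m p * A p) * Ric k m
      = A k * ((Scal + ψ * ((n:ℝ) - 1) * ((n:ℝ) - 2)) / 2) := by
    intro k
    have hL : ∑ m, (∑ p, ginv m p * A p) * (Ric k m + ψ * ((n:ℝ) - 1) * g k m)
        = ∑ j, ∑ l, ginv j l * (A k * (Ric j l + ψ * ((n:ℝ) - 1) * g j l)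
            - A j * (Ric k l + ψ * ((n:ℝ) - 1) * g k l)) := by
      calc ∑ m, (∑ p, ginv m p * A p) * (Ric k m + ψ * ((n:ℝ) - 1) * g k m)
          = ∑ m, (∑ p, ginv m p * A p) * (∑ j, ∑ l, ginv j l * (R j k l m - ψ * G j k l m)) := by
            refine sum_congr rfl fun m _ => ?_
            rw [hL4T k m]
        _ = ∑ j, ∑ l, ginv j l * (∑ m, (∑ p, ginv m p * A p) * (R j k l m - ψ * G j k l m)) :=
            swap3 _
        _ = ∑ j, ∑ l, ginv j l * (A k * (Ric j l + ψ * ((n:ℝ) - 1) * g j l)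
              - A j * (Ric k l + ψ * ((n:ℝ) - 1) * g k l)) := by
            refine sum_congr rfl fun j _ => sum_congr rfl fun l _ => ?_
            rw [hstar j k l]
    have htr2 : ∑ j, ∑ l, ginv j l * g j l = (n:ℝ) := by
      calc ∑ j, ∑ l, ginv j l * g j l
          = ∑ j, ∑ l, ginv j l * (g l j * 1) := by
            refine sum_congr rfl fun j _ => sum_congr rfl fun l _ => ?_
            rw [hgsymm j l]; ring
        _ = (n:ℝ) * 1 := key2 1
        _ = (n:ℝ) := by ring
    have hRHS : ∑ j, ∑ l, ginv j l * (A k * (Ric j l + ψ * ((n:ℝ) - 1) * g j l)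
          - A j * (Ric k l + ψ * ((n:ℝ) - 1) * g k l))
        = A k * (Scal + ψ * ((n:ℝ) - 1) * (n:ℝ))
          - ∑ l, (∑ p, ginv l p * A p) * (Ric k l + ψ * ((n:ℝ) - 1) * g k l) := by
      calc ∑ j, ∑ l, ginv j l * (A k * (Ric j l + ψ * ((n:ℝ) - 1) * g j l)
            - A j * (Ric k l + ψ * ((n:ℝ) - 1) * g k l))
          = ∑ j, ∑ l, ((A k * (ginv j l * Ric j l) + (A k * (ψ * ((n:ℝ) - 1))) * (ginv j l * g j l))
              - ginv j l * A j * (Ric k l + ψ * ((n:ℝ) - 1) * g k l)) := by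
            refine sum_congr rfl fun j _ => sum_congr rfl fun l _ => ?_; ring
        _ = (∑ j, ∑ l, (A k * (ginv j l * Ric j l) + (A k * (ψ * ((n:ℝ) - 1))) * (ginv j l * g j l)))
              - ∑ j, ∑ l, ginv j l * A j * (Ric k l + ψ * ((n:ℝ) - 1) * g k l) := by
            simp only [Finset.sum_sub_distrib]
        _ = (A k * (∑ j, ∑ l, ginv j l * Ric j l) + (A k * (ψ * ((n:ℝ) - 1))) * (∑ j, ∑ l, ginv j l * g j l))
              - ∑ j, ∑ l, ginv j l * A j * (Ric k l + ψ * ((n:ℝ) - 1) * g k l) := by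
            simp only [Finset.sum_add_distrib, ← Finset.mul_sum]
        _ = A k * (Scal + ψ * ((n:ℝ) - 1) * (n:ℝ))
              - ∑ l, (∑ p, ginv l p * A p) * (Ric k l + ψ * ((n:ℝ) - 1) * g k l) := by
            rw [← hScal, htr2]
            have : ∑ j, ∑ l, ginv j l * A j * (Ric k l + ψ * ((n:ℝ) - 1) * g k l)
                = ∑ l, (∑ p, ginv l p * A p) * (Ric k l + ψ * ((n:ℝ) - 1) * g k l) := by
              rw [Finset.sum_comm]
              refine sum_congr rfl fun l _ => ?_
              rw [Finset.sum_mul]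
              refine sum_congr rfl fun j _ => ?_
              rw [hiS l j]
            rw [this]; ring
    rw [hRHS] at hL
    have hexp : ∀ (s : Fin n → Fin n → ℝ) (a : Fin n),
        ∑ m, (∑ p, ginv m p * A p) * (Ric a m + ψ * ((n:ℝ) - 1) * g a m)
        = (∑ m, (∑ p, ginv m p * A p) * Ric a m) + ψ * ((n:ℝ) - 1) * A a := by
      intro _ a
      calc ∑ m, (∑ p, ginv m p * A p) * (Ric a m + ψ * ((n:ℝ) - 1) * g a m)
          = ∑ m, ((∑ p, ginv m p * A p) * Ric a m
              + (ψ * ((n:ℝ) - 1)) * ((∑ p, ginv m p * A p) * g a m)) := by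
            refine sum_congr rfl fun m _ => ?_; ring
        _ = (∑ m, (∑ p, ginv m p * A p) * Ric a m)
              + (ψ * ((n:ℝ) - 1)) * (∑ m, (∑ p, ginv m p * A p) * g a m) := by
            simp only [Finset.sum_add_distrib, ← Finset.mul_sum]
        _ = (∑ m, (∑ p, ginv m p * A p) * Ric a m) + ψ * ((n:ℝ) - 1) * A a := by
          rw [hAg2 a]
    rw [hexp Ric k] at hL
    linarith
  -- the key identity for A contracted with the Weyl tensor
  have hkey : ∀ j k l, ∑ m, (∑ p, ginv m p * A p) * C j k l m
      = (((3:ℝ) - (n:ℝ)) / ((n:ℝ) - 2)) *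
        (A j * (Ric k l - g k l * ((Scal - ψ * ((n:ℝ) - 1) * ((n:ℝ) - 2)) / (2 * ((n:ℝ) - 1))))
          - A k * (Ric j l - g j l * ((Scal - ψ * ((n:ℝ) - 1) * ((n:ℝ) - 2)) / (2 * ((n:ℝ) - 1))))) := by
    intro j k l
    calc ∑ m, (∑ p, ginv m p * A p) * C j k l m
        = ∑ m, ((∑ p, ginv m p * A p) * (R j k l m - ψ * G j k l m)
            + ((ψ - Scal / (((n:ℝ) - 1) * ((n:ℝ) - 2))) * g k l + Ric k l * (1 / ((n:ℝ) - 2)))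
                * ((∑ p, ginv m p * A p) * g m j)
            - ((ψ - Scal / (((n:ℝ) - 1) * ((n:ℝ) - 2))) * g j l + Ric j l * (1 / ((n:ℝ) - 2)))
                * ((∑ p, ginv m p * A p) * g m k)
            + (g k l * (1 / ((n:ℝ) - 2))) * ((∑ p, ginv m p * A p) * Ric j m)
            - (g j l * (1 / ((n:ℝ) - 2))) * ((∑ p, ginv m p * A p) * Ric k m)) := by
          refine sum_congr rfl fun m _ => ?_
          rw [hC, hG, hgsymm j m, hgsymm k m]; ring
      _ = (∑ m, (∑ p, ginv m p * A p) * (R j k l m - ψ * G j k l m))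
            + ((ψ - Scal / (((n:ℝ) - 1) * ((n:ℝ) - 2))) * g k l + Ric k l * (1 / ((n:ℝ) - 2)))
                * (∑ m, (∑ p, ginv m p * A p) * g m j)
            - ((ψ - Scal / (((n:ℝ) - 1) * ((n:ℝ) - 2))) * g j l + Ric j l * (1 / ((n:ℝ) - 2)))
                * (∑ m, (∑ p, ginv m p * A p) * g m k)
            + (g k l * (1 / ((n:ℝ) - 2))) * (∑ m, (∑ p, ginv m p * A p) * Ric j m)
            - (g j l * (1 / ((n:ℝ) - 2))) * (∑ m, (∑ p, ginv m p * A p) * Ric k m) := by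
          simp only [Finset.sum_add_distrib, Finset.sum_sub_distrib, ← Finset.mul_sum]
      _ = (((3:ℝ) - (n:ℝ)) / ((n:ℝ) - 2)) *
            (A j * (Ric k l - g k l * ((Scal - ψ * ((n:ℝ) - 1) * ((n:ℝ) - 2)) / (2 * ((n:ℝ) - 1))))
              - A k * (Ric j l - g j l * ((Scal - ψ * ((n:ℝ) - 1) * ((n:ℝ) - 2)) / (2 * ((n:ℝ) - 1))))) := by
          rw [hstar j k l, hAg j, hAg k, hARic j, hARic k]
          field_simp
          ring
  have hcoef : (((3:ℝ) - (n:ℝ)) / ((n:ℝ) - 2)) ≠ 0 := div_ne_zero h3 h2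
  constructor
  · intro h j k l
    have hh := h j k l
    rw [hkey j k l] at hh
    rcases mul_eq_zero.mp hh with hc | hd
    · exact absurd hc hcoef
    · exact sub_eq_zero.mp hd
  · intro h j k l
    rw [hkey j k l, h j k l, sub_self, mul_zero]
end

section
/- Let C be a (0,4)-tensor on V satisfying C_{jklm} = −C_{kjlm} and C_{jklm} = C_{lmjk}, and let A be a covector with A^m C_{jklm} = 0 for all j,k,l. If A_i C_{jklm} + A_j C_{kilm} + A_k C_{ijlm} = 0 for all indices, then (A^p A_p) C_{jklm} = 0 for all indices; in particular, if A^p A_p ≠ 0 then C = 0. -/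
open Finset

theorem stmt_4 (n : ℕ) (hn : 3 ≤ n)
    (g ginv : Fin n → Fin n → ℝ)
    (hgsymm : ∀ i j, g i j = g j i)
    (hginv : ∀ i j, ∑ k, g i k * ginv k j = if i = j then (1:ℝ) else 0)
    (C : Fin n → Fin n → Fin n → Fin n → ℝ)
    (hC1 : ∀ j k l m, C j k l m = - C k j l m)
    (hC2 : ∀ j k l m, C j k l m = C l m j k)
    (A : Fin n → ℝ)
    (hAC : ∀ j k l, (∑ m, (∑ p, ginv m p * A p) * C j k l m) = 0)
    (hcyc : ∀ i j k l m,
      A i * C j k l m + A j * C k i l m + A k * C i j l m = 0) :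
    (∀ j k l m, (∑ p, (∑ q, ginv p q * A q) * A p) * C j k l m = 0) ∧
      ((∑ p, (∑ q, ginv p q * A q) * A p) ≠ 0 → ∀ j k l m, C j k l m = 0) := by
  set f : Fin n → ℝ := fun i => ∑ q, ginv i q * A q with hf
  have key : ∀ j k l m, (∑ p, f p * A p) * C j k l m = 0 := by
    intro j k l m
    have hsum : ∑ i, f i * (A i * C j k l m + A j * C k i l m + A k * C i j l m)
        = 0 := by
      have : ∀ i, A i * C j k l m + A j * C k i l m + A k * C i j l m = 0 :=
        fun i => hcyc i j k l m
      simp [this]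
    have e1 : ∑ i, f i * C k i l m = 0 := by
      calc ∑ i, f i * C k i l m = ∑ i, f i * C l m k i :=
            Finset.sum_congr rfl fun i _ => by rw [hC2]
        _ = 0 := hAC l m k
    have e2 : ∑ i, f i * C i j l m = 0 := by
      calc ∑ i, f i * C i j l m = ∑ i, f i * (- C l m j i) :=
            Finset.sum_congr rfl fun i _ => by rw [hC1, hC2]
        _ = - ∑ i, f i * C l m j i := by simp [Finset.sum_neg_distrib]
        _ = 0 := by rw [hAC l m j]; ring
    have split : ∑ i, f i * (A i * C j k l m + A j * C k i l m + A k * C i j l m)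
        = (∑ p, f p * A p) * C j k l m + A j * (∑ i, f i * C k i l m)
          + A k * (∑ i, f i * C i j l m) := by
      rw [Finset.sum_mul, Finset.mul_sum, Finset.mul_sum,
        ← Finset.sum_add_distrib, ← Finset.sum_add_distrib]
      exact Finset.sum_congr rfl fun i _ => by ring
    rw [split, e1, e2] at hsum
    linarith
  refine ⟨key, fun hne j k l m => ?_⟩
  have := key j k l m
  exact (mul_eq_zero.mp this).resolve_left hne
end

section
/- Let Ric be a symmetric (0,2)-tensor on V with Scal = g^{kl} Ric_{kl}, A a covector with A² = A^p A_p ≠ 0, and ψ a real number. Suppose that Ric_{jm} A^m = (1/2) A_j (Scal + ψ(n−1)(n−2)) for all j, and that A_j ( Ric_{kl} − g_{kl} (Scal − ψ(n−1)(n−2))/(2(n−1)) ) = A_k ( Ric_{jl} − g_{jl} (Scal − ψ(n−1)(n−2))/(2(n−1)) ) for all j,k,l. Then Ric_{kl} = a g_{kl} + b A_k A_l / A² for all k,l, where a = (Scal − ψ(n−1)(n−2))/(2(n−1)) and b = ((n−2)/(2(n−1)))(Scal + ψ n(n−1)). -/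
open Finset

theorem stmt_5 (n : ℕ) (hn : 3 ≤ n)
    (g ginv : Fin n → Fin n → ℝ)
    (hgsymm : ∀ i j, g i j = g j i)
    (hginv : ∀ i j, ∑ k, g i k * ginv k j = if i = j then (1:ℝ) else 0)
    (Ric : Fin n → Fin n → ℝ)
    (hRicSymm : ∀ k l, Ric k l = Ric l k)
    (Scal : ℝ)
    (hScal : Scal = ∑ k, ∑ l, ginv k l * Ric k l)
    (A : Fin n → ℝ) (ψ : ℝ)
    (hA2 : (∑ p, (∑ q, ginv p q * A q) * A p) ≠ 0)
    (h1 : ∀ j, (∑ m, Ric j m * (∑ p, ginv m p * A p))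
      = (1 / 2) * A j * (Scal + ψ * ((n:ℝ) - 1) * ((n:ℝ) - 2)))
    (h2 : ∀ j k l, A j * (Ric k l - g k l * ((Scal - ψ * ((n:ℝ) - 1) * ((n:ℝ) - 2)) / (2 * ((n:ℝ) - 1))))
      = A k * (Ric j l - g j l * ((Scal - ψ * ((n:ℝ) - 1) * ((n:ℝ) - 2)) / (2 * ((n:ℝ) - 1))))) :
    ∀ k l, Ric k l
      = ((Scal - ψ * ((n:ℝ) - 1) * ((n:ℝ) - 2)) / (2 * ((n:ℝ) - 1))) * g k l
        + (((n:ℝ) - 2) / (2 * ((n:ℝ) - 1))) * (Scal + ψ * (n:ℝ) * ((n:ℝ) - 1))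
          * (A k * A l / (∑ p, (∑ q, ginv p q * A q) * A p)) := by
  intro k l
  have hn1 : ((n:ℝ) - 1) ≠ 0 := by
    have h3 : (3:ℝ) ≤ (n:ℝ) := by exact_mod_cast hn
    nlinarith
  set a : ℝ := (Scal - ψ * ((n:ℝ) - 1) * ((n:ℝ) - 2)) / (2 * ((n:ℝ) - 1)) with ha
  set c : ℝ := Scal + ψ * ((n:ℝ) - 1) * ((n:ℝ) - 2) with hc
  -- lowering the index: A^p contracted with g gives A
  have hgA : ∀ l', (∑ p, (∑ q, ginv p q * A q) * g p l') = A l' := by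
    intro l'
    have e1 : (∑ p, (∑ q, ginv p q * A q) * g p l')
        = ∑ p, ∑ q, g l' p * ginv p q * A q := by
      apply Finset.sum_congr rfl; intro p _
      rw [Finset.sum_mul]
      apply Finset.sum_congr rfl; intro q _
      rw [hgsymm p l']; ring
    have e2 : (∑ q, (∑ p, g l' p * ginv p q) * A q)
        = ∑ q, ∑ p, g l' p * ginv p q * A q := by
      apply Finset.sum_congr rfl; intro q _
      rw [Finset.sum_mul]
    rw [e1, Finset.sum_comm, ← e2]
    simp only [hginv]
    simp [Finset.sum_ite_eq', mul_ite]
  -- h1 rewritten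
  have hRA : (∑ p, (∑ q, ginv p q * A q) * Ric p l) = (1/2) * A l * c := by
    have := h1 l
    rw [← this]
    apply Finset.sum_congr rfl; intro p _
    rw [hRicSymm p l]; ring
  have key : (∑ p, (∑ q, ginv p q * A q) * A p) * (Ric k l - g k l * a)
      = A k * ((1/2) * A l * c - A l * a) := by
    calc (∑ p, (∑ q, ginv p q * A q) * A p) * (Ric k l - g k l * a)
        = ∑ p, (∑ q, ginv p q * A q) * (A k * (Ric p l - g p l * a)) := by
          rw [Finset.sum_mul]
          apply Finset.sum_congr rfl; intro p _
          rw [mul_assoc, h2 p k l]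
      _ = A k * ((∑ p, (∑ q, ginv p q * A q) * Ric p l)
            - (∑ p, (∑ q, ginv p q * A q) * g p l) * a) := by
          rw [Finset.sum_mul, ← Finset.sum_sub_distrib, Finset.mul_sum]
          apply Finset.sum_congr rfl; intro p _; ring
      _ = A k * ((1/2) * A l * c - A l * a) := by rw [hRA, hgA]
  -- conclude
  rw [ha] at key ⊢
  rw [hc] at key
  field_simp at key ⊢
  ring_nf at key ⊢
  nlinarith [key, sq_nonneg ((n:ℝ)-1)]
end

section
/- Let R be a curvature-like tensor on (V,g) whose Weyl tensor C vanishes identically, let A be a covector with A² ≠ 0 and ψ a real number, and suppose Ric_{kl} = a g_{kl} + b A_k A_l / A² with a = (Scal − ψ(n−1)(n−2))/(2(n−1)) and b = ((n−2)/(2(n−1)))(Scal + ψ n(n−1)). Then R has the quasi-constant-curvature form R_{jklm} = (b/(n−2)) [ −g_{jm} A_k A_l/A² + g_{km} A_j A_l/A² − g_{kl} A_j A_m/A² + g_{jl} A_k A_m/A² ] + ψ (g_{jm} g_{kl} − g_{jl} g_{km}). -/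
open Finset

theorem stmt_6 (n : ℕ) (hn : 3 ≤ n)
    (g ginv : Fin n → Fin n → ℝ)
    (hgsymm : ∀ i j, g i j = g j i)
    (hginv : ∀ i j, ∑ k, g i k * ginv k j = if i = j then (1:ℝ) else 0)
    (R : Fin n → Fin n → Fin n → Fin n → ℝ)
    (hR1 : ∀ j k l m, R j k l m = - R k j l m)
    (hR2 : ∀ j k l m, R j k l m = - R j k m l)
    (hR3 : ∀ j k l m, R j k l m = R l m j k)
    (hR4 : ∀ j k l m, R j k l m + R k l j m + R l j k m = 0)
    (Ric : Fin n → Fin n → ℝ)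
    (hRic : ∀ k l, Ric k l = ∑ i, ∑ m, ginv i m * R k i l m)
    (Scal : ℝ)
    (hScal : Scal = ∑ k, ∑ l, ginv k l * Ric k l)
    (C : Fin n → Fin n → Fin n → Fin n → ℝ)
    (hC : ∀ j k l m, C j k l m = R j k l m
      + (1 / ((n:ℝ) - 2)) * (g j m * Ric k l - g k m * Ric j l
          + Ric j m * g k l - Ric k m * g j l)
      - (Scal / (((n:ℝ) - 1) * ((n:ℝ) - 2))) * (g j m * g k l - g k m * g j l))
    (hCzero : ∀ j k l m, C j k l m = 0)
    (A : Fin n → ℝ) (ψ : ℝ)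
    (hA2 : (∑ p, (∑ q, ginv p q * A q) * A p) ≠ 0)
    (hRicForm : ∀ k l, Ric k l
      = ((Scal - ψ * ((n:ℝ) - 1) * ((n:ℝ) - 2)) / (2 * ((n:ℝ) - 1))) * g k l
        + (((n:ℝ) - 2) / (2 * ((n:ℝ) - 1))) * (Scal + ψ * (n:ℝ) * ((n:ℝ) - 1))
          * (A k * A l / (∑ p, (∑ q, ginv p q * A q) * A p))) :
    ∀ j k l m, R j k l m
      = ((((n:ℝ) - 2) / (2 * ((n:ℝ) - 1))) * (Scal + ψ * (n:ℝ) * ((n:ℝ) - 1)) / ((n:ℝ) - 2)) *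
          (- g j m * (A k * A l / (∑ p, (∑ q, ginv p q * A q) * A p))
            + g k m * (A j * A l / (∑ p, (∑ q, ginv p q * A q) * A p))
            - g k l * (A j * A m / (∑ p, (∑ q, ginv p q * A q) * A p))
            + g j l * (A k * A m / (∑ p, (∑ q, ginv p q * A q) * A p)))
        + ψ * (g j m * g k l - g j l * g k m) := by
  intro j k l m
  have hn2 : ((n:ℝ) - 2) ≠ 0 := by
    have : (3:ℝ) ≤ (n:ℝ) := by exact_mod_cast hn
    linarith
  have hn1 : ((n:ℝ) - 1) ≠ 0 := by
    have : (3:ℝ) ≤ (n:ℝ) := by exact_mod_cast hn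
    linarith
  have h := hC j k l m
  rw [hCzero] at h
  have hRv : R j k l m = - (1 / ((n:ℝ) - 2)) * (g j m * Ric k l - g k m * Ric j l
          + Ric j m * g k l - Ric k m * g j l)
      + (Scal / (((n:ℝ) - 1) * ((n:ℝ) - 2))) * (g j m * g k l - g k m * g j l) := by
    linarith [h]
  rw [hRv, hRicForm k l, hRicForm j l, hRicForm j m, hRicForm k m]
  field_simp
  ring
end

section
/- Let R be a curvature-like tensor on (V,g), A a covector, and β, ψ real numbers. Define D_{ijklm} = A_i R_{jklm} + (β − ψ) A_i G_{jklm} + (β/2)(A_j G_{iklm} + A_k G_{jilm} + A_l G_{jkim} + A_m G_{jkli}), F_{ijl} := g^{km} D_{ijklm}, S_i := g^{jl} F_{ijl}, and E_{ijklm} := D_{ijklm} + (1/(n−2))( g_{jm} F_{ikl} − g_{km} F_{ijl} + F_{ijm} g_{kl} − F_{ikm} g_{jl} ) − (S_i/((n−1)(n−2)))( g_{jm} g_{kl} − g_{km} g_{jl} ). Then E_{ijklm} = A_i C_{jklm} for all indices, where C is the Weyl tensor of R. -/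
open Finset

lemma aux1 {n : ℕ} (g ginv : Fin n → Fin n → ℝ)
    (h2 : ∀ i j, ∑ k, ginv i k * g k j = if i = j then (1:ℝ) else 0)
    (f : Fin n → ℝ) (j : Fin n) :
    ∑ k, ∑ m, ginv k m * g m j * f k = f j := by
  have h : ∀ k : Fin n, ∑ m, ginv k m * g m j * f k
      = (if k = j then (1:ℝ) else 0) * f k := by
    intro k; rw [← Finset.sum_mul, h2]
  rw [Finset.sum_congr rfl (fun k _ => h k)]
  simp

lemma aux2 {n : ℕ} (g ginv : Fin n → Fin n → ℝ)
    (hgsymm : ∀ i j, g i j = g j i)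
    (h1 : ∀ i j, ∑ k, g i k * ginv k j = if i = j then (1:ℝ) else 0)
    (f : Fin n → ℝ) (j : Fin n) :
    ∑ k, ∑ m, ginv k m * g k j * f m = f j := by
  rw [Finset.sum_comm]
  have h : ∀ m : Fin n, ∑ k, ginv k m * g k j * f m
      = (if j = m then (1:ℝ) else 0) * f m := by
    intro m
    rw [← Finset.sum_mul, ← h1 j m]
    congr 1
    exact Finset.sum_congr rfl (fun k _ => by rw [hgsymm k j]; ring)
  rw [Finset.sum_congr rfl (fun m _ => h m)]
  simp

lemma aux3 {n : ℕ} (g ginv : Fin n → Fin n → ℝ)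
    (h2 : ∀ i j, ∑ k, ginv i k * g k j = if i = j then (1:ℝ) else 0) :
    ∑ k : Fin n, ∑ m, ginv k m * g m k = (n:ℝ) := by
  have h : ∀ k : Fin n, ∑ m, ginv k m * g m k = 1 := by
    intro k; rw [h2]; simp
  rw [Finset.sum_congr rfl (fun k _ => h k)]
  simp

theorem stmt_9 (n : ℕ) (hn : 3 ≤ n)
    (g ginv : Fin n → Fin n → ℝ)
    (hgsymm : ∀ i j, g i j = g j i)
    (hginv : ∀ i j, ∑ k, g i k * ginv k j = if i = j then (1:ℝ) else 0)
    (R : Fin n → Fin n → Fin n → Fin n → ℝ)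
    (hR1 : ∀ j k l m, R j k l m = - R k j l m)
    (hR2 : ∀ j k l m, R j k l m = - R j k m l)
    (hR3 : ∀ j k l m, R j k l m = R l m j k)
    (hR4 : ∀ j k l m, R j k l m + R k l j m + R l j k m = 0)
    (G : Fin n → Fin n → Fin n → Fin n → ℝ)
    (hG : ∀ j k l m, G j k l m = g m j * g k l - g m k * g j l)
    (Ric : Fin n → Fin n → ℝ)
    (hRic : ∀ k l, Ric k l = ∑ i, ∑ m, ginv i m * R k i l m)
    (Scal : ℝ)
    (hScal : Scal = ∑ k, ∑ l, ginv k l * Ric k l)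
    (C : Fin n → Fin n → Fin n → Fin n → ℝ)
    (hC : ∀ j k l m, C j k l m = R j k l m
      + (1 / ((n:ℝ) - 2)) * (g j m * Ric k l - g k m * Ric j l
          + Ric j m * g k l - Ric k m * g j l)
      - (Scal / (((n:ℝ) - 1) * ((n:ℝ) - 2))) * (g j m * g k l - g k m * g j l))
    (A : Fin n → ℝ) (β ψ : ℝ)
    (D : Fin n → Fin n → Fin n → Fin n → Fin n → ℝ)
    (hD : ∀ i j k l m, D i j k l m = A i * R j k l m + (β - ψ) * A i * G j k l m
      + (β / 2) * (A j * G i k l m + A k * G j i l m + A l * G j k i m + A m * G j k l i))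
    (F : Fin n → Fin n → Fin n → ℝ)
    (hF : ∀ i j l, F i j l = ∑ k, ∑ m, ginv k m * D i j k l m)
    (S : Fin n → ℝ)
    (hS : ∀ i, S i = ∑ j, ∑ l, ginv j l * F i j l)
    (E : Fin n → Fin n → Fin n → Fin n → Fin n → ℝ)
    (hE : ∀ i j k l m, E i j k l m = D i j k l m
      + (1 / ((n:ℝ) - 2)) * (g j m * F i k l - g k m * F i j l
          + F i j m * g k l - F i k m * g j l)
      - (S i / (((n:ℝ) - 1) * ((n:ℝ) - 2))) * (g j m * g k l - g k m * g j l)) :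
    ∀ i j k l m, E i j k l m = A i * C j k l m := by
  -- other side inverse
  have h2 : ∀ i j, ∑ k, ginv i k * g k j = if i = j then (1:ℝ) else 0 := by
    have hMN : (Matrix.of g) * (Matrix.of ginv) = 1 := by
      ext i j
      simpa [Matrix.mul_apply, Matrix.one_apply] using hginv i j
    have hNM := mul_eq_one_comm.mp hMN
    intro i j
    have h := congrFun (congrFun hNM i) j
    simpa [Matrix.mul_apply, Matrix.one_apply] using h
  -- closed form for F
  have hFc : ∀ i j l, F i j l = A i * Ric j l
      + (β - ψ) * A i * ((1:ℝ) - n) * g j l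
      + (β/2) * (((2:ℝ) - n) * (A j * g i l + A l * g i j) - 2 * A i * g j l) := by
    intro i j l
    have key : ∀ k m : Fin n, ginv k m * D i j k l m =
        A i * (ginv k m * R j k l m)
        + (β - ψ) * A i * (ginv k m * g m j * g k l)
        - (β - ψ) * A i * g j l * (ginv k m * g m k)
        + (β/2) * A j * (ginv k m * g m i * g k l)
        - (β/2) * A j * g i l * (ginv k m * g m k)
        + (β/2) * g i l * (ginv k m * g m j * A k)
        - (β/2) * g j l * (ginv k m * g m i * A k)
        + (β/2) * A l * (ginv k m * g m j * g k i)
        - (β/2) * A l * g j i * (ginv k m * g m k)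
        + (β/2) * g i j * (ginv k m * g k l * A m)
        - (β/2) * g j l * (ginv k m * g k i * A m) := by
      intro k m
      simp only [hD, hG]
      rw [hgsymm i k]
      ring
    have split : F i j l =
        A i * (∑ k, ∑ m, ginv k m * R j k l m)
        + (β - ψ) * A i * (∑ k, ∑ m, ginv k m * g m j * g k l)
        - (β - ψ) * A i * g j l * (∑ k, ∑ m, ginv k m * g m k)
        + (β/2) * A j * (∑ k, ∑ m, ginv k m * g m i * g k l)
        - (β/2) * A j * g i l * (∑ k, ∑ m, ginv k m * g m k)
        + (β/2) * g i l * (∑ k, ∑ m, ginv k m * g m j * A k)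
        - (β/2) * g j l * (∑ k, ∑ m, ginv k m * g m i * A k)
        + (β/2) * A l * (∑ k, ∑ m, ginv k m * g m j * g k i)
        - (β/2) * A l * g j i * (∑ k, ∑ m, ginv k m * g m k)
        + (β/2) * g i j * (∑ k, ∑ m, ginv k m * g k l * A m)
        - (β/2) * g j l * (∑ k, ∑ m, ginv k m * g k i * A m) := by
      rw [hF]
      simp only [Finset.mul_sum, ← Finset.sum_add_distrib, ← Finset.sum_sub_distrib]
      exact Finset.sum_congr rfl (fun k _ => Finset.sum_congr rfl (fun m _ => key k m))
    rw [split, ← hRic j l,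
      aux1 g ginv h2 (fun k => g k l) j,
      aux3 g ginv h2,
      aux1 g ginv h2 (fun k => g k l) i,
      aux1 g ginv h2 A j,
      aux1 g ginv h2 A i,
      aux1 g ginv h2 (fun k => g k i) j,
      aux2 g ginv hgsymm hginv A l,
      aux2 g ginv hgsymm hginv A i]
    rw [hgsymm j i]
    ring
  -- closed form for S
  have hSc : ∀ i, S i = A i * (Scal + (β - ψ) * ((1:ℝ) - n) * n + β * ((2:ℝ) - 2*n)) := by
    intro i
    have key : ∀ j l : Fin n, ginv j l * F i j l =
        A i * (ginv j l * Ric j l)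
        + (β - ψ) * A i * ((1:ℝ) - n) * (ginv j l * g l j)
        + (β/2) * ((2:ℝ) - n) * (ginv j l * g l i * A j)
        + (β/2) * ((2:ℝ) - n) * (ginv j l * g j i * A l)
        - β * A i * (ginv j l * g l j) := by
      intro j l
      rw [hFc i j l, hgsymm j l, hgsymm i l, hgsymm i j]
      ring
    have split : S i =
        A i * (∑ j, ∑ l, ginv j l * Ric j l)
        + (β - ψ) * A i * ((1:ℝ) - n) * (∑ j, ∑ l, ginv j l * g l j)
        + (β/2) * ((2:ℝ) - n) * (∑ j, ∑ l, ginv j l * g l i * A j)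
        + (β/2) * ((2:ℝ) - n) * (∑ j, ∑ l, ginv j l * g j i * A l)
        - β * A i * (∑ j, ∑ l, ginv j l * g l j) := by
      rw [hS]
      simp only [Finset.mul_sum, ← Finset.sum_add_distrib, ← Finset.sum_sub_distrib]
      exact Finset.sum_congr rfl (fun j _ => Finset.sum_congr rfl (fun l _ => key j l))
    rw [split, ← hScal,
      aux3 g ginv h2,
      aux1 g ginv h2 A i,
      aux2 g ginv hgsymm hginv A i]
    ring
  -- final
  have hn3 : (3:ℝ) ≤ (n:ℝ) := by exact_mod_cast hn
  have hn2 : (n:ℝ) - 2 ≠ 0 := by linarith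
  have hn1 : (n:ℝ) - 1 ≠ 0 := by linarith
  intro i j k l m
  rw [hE, hC, hD, hSc, hFc, hFc, hFc, hFc]
  simp only [hG]
  simp only [hgsymm j i, hgsymm k i, hgsymm l i, hgsymm m i, hgsymm k j, hgsymm l j,
    hgsymm m j, hgsymm l k, hgsymm m k, hgsymm m l]
  field_simp
  ring
end
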